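/- arXiv:1804.04533 — 2 statements merged into one kernel-verified Lean document; each statement's English description precedes it below -/
import Mathlib

section
/- For fixed q > 0, the limit as Δt → 0⁺ of (1/Δt)·[Σ_x p(x)·φ(q·x·Δt) − φ(q·Δt·Σ_x p(x)·x)] equals q·(E[φ(x)] − φ(E[x])), where φ(t) = t·log t and E denotes expectation under p. -/
/-- φ(t) = t·log t (φ(0) = 0 since `Real.log 0 = 0`). -/
noncomputable def phi (t : ℝ) : ℝ := t * Real.log t

/-- For fixed q > 0,
lim_{Δt→0⁺} (1/Δt)·[Σ p(x)·φ(q·x·Δt) − φ(q·Δt·Σ p(x)·x)]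
  = q·(E[φ(x)] − φ(E[x])). -/
theorem per_time_entropy_gap_limit (X : Finset ℝ) (p : ℝ → ℝ)
    (hXpos : ∀ x ∈ X, 0 < x)
    (hp0 : ∀ x ∈ X, 0 ≤ p x) (hp1 : ∑ x ∈ X, p x = 1)
    (q : ℝ) (hq : 0 < q) :
    Filter.Tendsto
      (fun Δt : ℝ =>
        (1 / Δt) * ((∑ x ∈ X, p x * phi (q * x * Δt))
          - phi (q * Δt * ∑ x ∈ X, p x * x)))
      (nhdsWithin 0 (Set.Ioi 0))
      (nhds (q * ((∑ x ∈ X, p x * phi x) - phi (∑ x ∈ X, p x * x)))) := by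
  have hm : 0 < ∑ x ∈ X, p x * x := by
    rcases Finset.exists_ne_zero_of_sum_ne_zero
      (by simp [hp1] : (∑ x ∈ X, p x) ≠ 0) with ⟨x, hx, hpx⟩
    exact Finset.sum_pos'
      (fun y hy => mul_nonneg (hp0 y hy) (hXpos y hy).le)
      ⟨x, hx, mul_pos ((hp0 x hx).lt_of_ne (Ne.symm hpx)) (hXpos x hx)⟩
  apply Filter.Tendsto.congr' _ tendsto_const_nhds
  filter_upwards [self_mem_nhdsWithin] with t ht
  have ht : (0:ℝ) < t := ht
  have key : ∀ x ∈ X, p x * phi (q*x*t)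
      = q*t*(p x * x * (Real.log q + Real.log t) + p x * (x * Real.log x)) := by
    intro x hx
    have hx0 := hXpos x hx
    have hl : Real.log (q*x*t) = Real.log q + Real.log x + Real.log t := by
      rw [Real.log_mul (by positivity) (ne_of_gt ht),
        Real.log_mul (ne_of_gt hq) (ne_of_gt hx0)]
    simp only [phi, hl]; ring
  rw [Finset.sum_congr rfl key]
  have hlog : Real.log (q * t * ∑ x ∈ X, p x * x)
      = Real.log q + Real.log t + Real.log (∑ x ∈ X, p x * x) := by
    rw [Real.log_mul (by positivity) (ne_of_gt hm),
      Real.log_mul (ne_of_gt hq) (ne_of_gt ht)]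
  simp only [phi, hlog, Finset.sum_add_distrib, ← Finset.sum_mul, ← Finset.mul_sum]
  field_simp
  ring
end

section
/- For a channel with joint law p(x^n,y^n) = ∏_i p_X(x_i)·p(y_i|x_i,y_{i−1}) (IID inputs), the mutual information decomposes as I(X^n;Y^n) = Σ_{i=1}^n Σ_{y_i,y_{i−1},x_i} p(y_i,x_i,y_{i−1})·log( p(y_i|x_i,y_{i−1}) / p̄(y_i|y_{i−1}) ), where p̄(y'|y) = Σ_x p_X(x)·p(y'|x,y). -/
/-!
Because the inputs are IID and each output depends on the past only through the previous
output, the sum of the joint law over `x^n` factorises coordinatewise: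
`p(y^n) = p̄₀(y₁) ∏ p̄(y_i | y_{i-1})`.
Hence the information density `log p(y^n | x^n) / p(y^n)` splits into per-step terms, each depending
only on `(y_{i-1}, x_i, y_i)`, and averaging a term against the joint law only sees its marginal.
For the initial term that marginal is `p_X(x) p₀(y | x)`, because all later kernels are stochastic
and sum out along the path.
-/

open Finset

theorem sum_mul_prod_stochastic_eq_sum {S : Type*} [Fintype S] {m : ℕ} (μ : S → ℝ)
    (P : Fin m → S → S → ℝ) (hP : ∀ i s, ∑ t, P i s t = 1) :
    ∑ s : Fin (m + 1) → S, μ (s 0) * ∏ i, P i (s i.castSucc) (s i.succ) = ∑ c, μ c := by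
  induction m with
  | zero =>
    rw [← (Equiv.funUnique (Fin 1) S).symm.sum_comp]
    simp
  | succ m ih =>
    rw [← (Fin.snocEquiv fun _ => S).sum_comp, Fintype.sum_prod_type, Finset.sum_comm]
    simp only [Fin.snocEquiv_apply, Fin.prod_univ_castSucc, Fin.succ_castSucc, Fin.snoc_castSucc,
      Fin.succ_last, Fin.snoc_last]
    have hsnoc0 (s : Fin (m + 1) → S) (t : S) : Fin.snoc (α := fun _ => S) s t 0 = s 0 :=
      Fin.snoc_castSucc (α := fun _ => S) t s 0
    simp only [hsnoc0, ← mul_assoc, ← Finset.mul_sum, hP, mul_one]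
    exact ih _ fun i => hP i.castSucc

theorem sum_sum_mul_comp_eq_sum_marginal {α β γ : Type*} [Fintype α] [Fintype β] [Fintype γ]
    [DecidableEq γ] (w : α → β → ℝ) (φ : α → β → γ) (f : γ → ℝ) :
    ∑ x, ∑ y, w x y * f (φ x y) =
      ∑ c, (∑ x, ∑ y, if φ x y = c then w x y else 0) * f c := by
  symm
  simp only [Finset.sum_mul, ite_mul, zero_mul]
  rw [Finset.sum_comm]
  refine Finset.sum_congr rfl fun x _ => ?_
  rw [Finset.sum_comm]
  simp

theorem Real.log_mul_prod_div_mul_prod {ι : Type*} (s : Finset ι) {a b : ℝ} {f g : ι → ℝ}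
    (ha : a ≠ 0) (hb : b ≠ 0) (hf : ∀ i ∈ s, f i ≠ 0) (hg : ∀ i ∈ s, g i ≠ 0) :
    Real.log ((a * ∏ i ∈ s, f i) / (b * ∏ i ∈ s, g i)) =
      Real.log (a / b) + ∑ i ∈ s, Real.log (f i / g i) := by
  rw [mul_div_mul_comm, ← prod_div_distrib, Real.log_mul (div_ne_zero ha hb), Real.log_prod]
  · exact fun i hi => div_ne_zero (hf i hi) (hg i hi)
  · exact prod_ne_zero_iff.mpr fun i hi => div_ne_zero (hf i hi) (hg i hi)

section IIDChannel

variable {𝒳 𝒴 : Type*} [Fintype 𝒳] {n : ℕ}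
  (pX : 𝒳 → ℝ) (K0 : 𝒳 → 𝒴 → ℝ) (K : 𝒴 → 𝒳 → 𝒴 → ℝ)

theorem sum_iid_mul_channel_eq_prod_sum (y : Fin (n + 1) → 𝒴) :
    ∑ x : Fin (n + 1) → 𝒳, (∏ i, pX (x i)) *
        (K0 (x 0) (y 0) * ∏ i : Fin n, K (y i.castSucc) (x i.succ) (y i.succ))
      = (∑ a, pX a * K0 a (y 0)) *
          ∏ i : Fin n, ∑ a, pX a * K (y i.castSucc) a (y i.succ) := by
  let F : Fin (n + 1) → 𝒳 → ℝ := Fin.cons (fun a => pX a * K0 a (y 0))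
    fun i a => pX a * K (y i.castSucc) a (y i.succ)
  have hF (x : Fin (n + 1) → 𝒳) :
      (∏ i, pX (x i)) * (K0 (x 0) (y 0) * ∏ i : Fin n, K (y i.castSucc) (x i.succ) (y i.succ)) =
        ∏ j, F j (x j) := by
    simp only [F, Fin.prod_univ_succ, Fin.cons_zero, Fin.cons_succ, prod_mul_distrib]
    ring
  rw [Finset.sum_congr rfl fun x _ => hF x, ← Fintype.prod_sum, Fin.prod_univ_succ]
  rfl

theorem sum_sum_ite_init_iid_mul_channel_eq [Fintype 𝒴] [DecidableEq 𝒳] [DecidableEq 𝒴]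
    (hpX : ∑ a, pX a = 1) (hK : ∀ y a, ∑ y', K y a y' = 1) (a : 𝒳) (b : 𝒴) :
    ∑ x : Fin (n + 1) → 𝒳, ∑ y : Fin (n + 1) → 𝒴,
        (if x 0 = a ∧ y 0 = b then (∏ i, pX (x i)) *
          (K0 (x 0) (y 0) * ∏ i : Fin n, K (y i.castSucc) (x i.succ) (y i.succ)) else 0)
      = pX a * K0 a b := by
  have hy (x : Fin (n + 1) → 𝒳) :
      ∑ y : Fin (n + 1) → 𝒴, (if y 0 = b then K0 (x 0) (y 0) else 0) *
        ∏ i : Fin n, K (y i.castSucc) (x i.succ) (y i.succ) = K0 (x 0) b := by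
    rw [sum_mul_prod_stochastic_eq_sum (fun c => if c = b then K0 (x 0) c else 0)
      (fun i s t => K s (x i.succ) t) fun i s => hK s _]
    simp
  have hx : ∑ x : Fin (n + 1) → 𝒳,
      (if x 0 = a then pX (x 0) * K0 (x 0) b else 0) * ∏ i : Fin n, pX (x i.succ)
        = pX a * K0 a b := by
    rw [sum_mul_prod_stochastic_eq_sum (fun c => if c = a then pX c * K0 c b else 0)
      (fun _ _ t => pX t) fun _ _ => hpX]
    simp
  rw [← hx]
  refine Finset.sum_congr rfl fun x _ => ?_
  rw [← hy x]
  by_cases hxa : x 0 = a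
  · simp only [hxa, true_and, if_true, Finset.mul_sum, Finset.sum_mul, Fin.prod_univ_succ]
    refine Finset.sum_congr rfl fun y _ => ?_
    split_ifs <;> ring
  · simp [hxa]

end IIDChannel

theorem mutual_information_decomposition_general {𝒳 𝒴 : Type*} [Fintype 𝒳] [Fintype 𝒴]
    [DecidableEq 𝒳] [DecidableEq 𝒴] (n : ℕ)
    (pX : 𝒳 → ℝ) (hpX0 : ∀ a, 0 < pX a) (hpX1 : ∑ a, pX a = 1)
    (K0 : 𝒳 → 𝒴 → ℝ) (hK00 : ∀ a b, 0 < K0 a b)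
    (K : 𝒴 → 𝒳 → 𝒴 → ℝ) (hK0 : ∀ y a y', 0 < K y a y')
    (hK1 : ∀ y a, ∑ y', K y a y' = 1)
    -- conditional output law p(y^n|x^n)
    (pcond : (Fin (n + 1) → 𝒳) → (Fin (n + 1) → 𝒴) → ℝ)
    (hpcond : ∀ x y, pcond x y =
      K0 (x 0) (y 0) * ∏ i : Fin n, K (y i.castSucc) (x i.succ) (y i.succ))
    -- joint law p(x^n, y^n)
    (joint : (Fin (n + 1) → 𝒳) → (Fin (n + 1) → 𝒴) → ℝ)
    (hjoint : ∀ x y, joint x y = (∏ i, pX (x i)) * pcond x y)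
    -- output marginal p(y^n)
    (pY : (Fin (n + 1) → 𝒴) → ℝ)
    (hpY : ∀ y, pY y = ∑ x, joint x y)
    -- homogeneous kernels p̄₀(y) and p̄(y'|y)
    (Kbar0 : 𝒴 → ℝ) (hKbar0 : ∀ b, Kbar0 b = ∑ a, pX a * K0 a b)
    (Kbar : 𝒴 → 𝒴 → ℝ) (hKbar : ∀ y y', Kbar y y' = ∑ a, pX a * K y a y')
    -- three-way marginals p(y_{i-1}, x_i, y_i)
    (marg : Fin n → 𝒴 → 𝒳 → 𝒴 → ℝ)
    (hmarg : ∀ i ya a yb, marg i ya a yb =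
      ∑ x : Fin (n + 1) → 𝒳, ∑ y : Fin (n + 1) → 𝒴,
        (if x i.succ = a ∧ y i.castSucc = ya ∧ y i.succ = yb
          then joint x y else 0)) :
    ∑ x : Fin (n + 1) → 𝒳, ∑ y : Fin (n + 1) → 𝒴,
        joint x y * Real.log (pcond x y / pY y)
      = (∑ b : 𝒴, ∑ a : 𝒳,
            (pX a * K0 a b) * Real.log (K0 a b / Kbar0 b))
        + ∑ i : Fin n, ∑ ya : 𝒴, ∑ yb : 𝒴, ∑ a : 𝒳,
            marg i ya a yb * Real.log (K ya a yb / Kbar ya yb) := by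
  have hX : (univ : Finset 𝒳).Nonempty := nonempty_of_sum_ne_zero (hpX1 ▸ one_ne_zero)
  have hKbar0_pos (b : 𝒴) : 0 < Kbar0 b :=
    hKbar0 b ▸ sum_pos (fun a _ => mul_pos (hpX0 a) (hK00 a b)) hX
  have hKbar_pos (y y' : 𝒴) : 0 < Kbar y y' :=
    hKbar y y' ▸ sum_pos (fun a _ => mul_pos (hpX0 a) (hK0 y a y')) hX
  have hpY_eq (y : Fin (n + 1) → 𝒴) :
      pY y = Kbar0 (y 0) * ∏ i : Fin n, Kbar (y i.castSucc) (y i.succ) := by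
    simp only [hpY, hjoint, hpcond, hKbar0, hKbar]
    exact sum_iid_mul_channel_eq_prod_sum pX K0 K y
  have hlog (x : Fin (n + 1) → 𝒳) (y : Fin (n + 1) → 𝒴) :
      Real.log (pcond x y / pY y) = Real.log (K0 (x 0) (y 0) / Kbar0 (y 0)) + ∑ i : Fin n,
        Real.log (K (y i.castSucc) (x i.succ) (y i.succ) / Kbar (y i.castSucc) (y i.succ)) := by
    rw [hpcond, hpY_eq]
    exact Real.log_mul_prod_div_mul_prod _ (hK00 _ _).ne' (hKbar0_pos _).ne'
      (fun i _ => (hK0 _ _ _).ne') fun i _ => (hKbar_pos _ _).ne'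
  simp only [hlog, mul_add, Finset.mul_sum, Finset.sum_add_distrib]
  congr 1
  · rw [sum_sum_mul_comp_eq_sum_marginal joint (fun x y => (x 0, y 0))
      (fun c => Real.log (K0 c.1 c.2 / Kbar0 c.2)), Fintype.sum_prod_type, Finset.sum_comm]
    refine Finset.sum_congr rfl fun b _ => Finset.sum_congr rfl fun a _ => ?_
    simp only [Prod.mk.injEq, hjoint, hpcond,
      sum_sum_ite_init_iid_mul_channel_eq pX K0 K hpX1 hK1]
  · rw [Finset.sum_congr rfl fun x _ => Finset.sum_comm, Finset.sum_comm]
    refine Finset.sum_congr rfl fun i _ => ?_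
    rw [sum_sum_mul_comp_eq_sum_marginal joint (fun x y => (y i.castSucc, y i.succ, x i.succ))
      (fun c => Real.log (K c.1 c.2.2 c.2.1 / Kbar c.1 c.2.1))]
    simp only [Fintype.sum_prod_type, hmarg, Prod.mk.injEq]
    refine Finset.sum_congr rfl fun ya _ => Finset.sum_congr rfl fun yb _ =>
      Finset.sum_congr rfl fun a _ => ?_
    simp only [← and_rotate (a := _ = a)]

/-- For the channel with joint law
p(x^n,y^n) = ∏_i pX(x_i)·p(y_i|x_i,y_{i−1}) (IID inputs, y_0 null), the mutual
information decomposes as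
I(X^n;Y^n) = Σ_{i=1}^n Σ_{y_i,y_{i−1},x_i} p(y_i,x_i,y_{i−1})·
  log( p(y_i|x_i,y_{i−1}) / p̄(y_i|y_{i−1}) ), with p̄(y'|y) = Σ_x pX(x)·p(y'|x,y).
The i = 1 term uses the null-y₀ (initial) kernel. -/
theorem mutual_information_decomposition {𝒳 𝒴 : Type*} [Fintype 𝒳] [Fintype 𝒴]
    [DecidableEq 𝒳] [DecidableEq 𝒴] (n : ℕ)
    (pX : 𝒳 → ℝ) (hpX0 : ∀ a, 0 < pX a) (hpX1 : ∑ a, pX a = 1)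
    (K0 : 𝒳 → 𝒴 → ℝ) (hK00 : ∀ a b, 0 < K0 a b) (hK01 : ∀ a, ∑ b, K0 a b = 1)
    (K : 𝒴 → 𝒳 → 𝒴 → ℝ) (hK0 : ∀ y a y', 0 < K y a y')
    (hK1 : ∀ y a, ∑ y', K y a y' = 1)
    -- conditional output law p(y^n|x^n)
    (pcond : (Fin (n + 1) → 𝒳) → (Fin (n + 1) → 𝒴) → ℝ)
    (hpcond : ∀ x y, pcond x y =
      K0 (x 0) (y 0) * ∏ i : Fin n, K (y i.castSucc) (x i.succ) (y i.succ))
    -- joint law p(x^n, y^n)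
    (joint : (Fin (n + 1) → 𝒳) → (Fin (n + 1) → 𝒴) → ℝ)
    (hjoint : ∀ x y, joint x y = (∏ i, pX (x i)) * pcond x y)
    -- output marginal p(y^n)
    (pY : (Fin (n + 1) → 𝒴) → ℝ)
    (hpY : ∀ y, pY y = ∑ x, joint x y)
    -- homogeneous kernels p̄₀(y) and p̄(y'|y)
    (Kbar0 : 𝒴 → ℝ) (hKbar0 : ∀ b, Kbar0 b = ∑ a, pX a * K0 a b)
    (Kbar : 𝒴 → 𝒴 → ℝ) (hKbar : ∀ y y', Kbar y y' = ∑ a, pX a * K y a y')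
    -- three-way marginals p(y_{i-1}, x_i, y_i)
    (marg : Fin n → 𝒴 → 𝒳 → 𝒴 → ℝ)
    (hmarg : ∀ i ya a yb, marg i ya a yb =
      ∑ x : Fin (n + 1) → 𝒳, ∑ y : Fin (n + 1) → 𝒴,
        (if x i.succ = a ∧ y i.castSucc = ya ∧ y i.succ = yb
          then joint x y else 0)) :
    ∑ x : Fin (n + 1) → 𝒳, ∑ y : Fin (n + 1) → 𝒴,
        joint x y * Real.log (pcond x y / pY y)
      = (∑ b : 𝒴, ∑ a : 𝒳,
            (pX a * K0 a b) * Real.log (K0 a b / Kbar0 b))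
        + ∑ i : Fin n, ∑ ya : 𝒴, ∑ yb : 𝒴, ∑ a : 𝒳,
            marg i ya a yb * Real.log (K ya a yb / Kbar ya yb) :=
  mutual_information_decomposition_general n pX hpX0 hpX1 K0 hK00 K hK0 hK1 pcond hpcond joint
    hjoint pY hpY Kbar0 hKbar0 Kbar hKbar marg hmarg
end
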